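/- Let A and B be symmetric positive definite d×d matrices with smallest eigenvalue of both at least λ₀ > 0. Then d_BW(A,B)² ≤ (1/(4λ₀))·‖A − B‖_F², where d_BW is the Bures–Wasserstein metric. -/

import Mathlib

open scoped Classical

/-- Frobenius norm of a real square matrix. -/
noncomputable def frobNorm {d : ℕ} (M : Matrix (Fin d) (Fin d) ℝ) : ℝ :=
  Real.sqrt (∑ k, ∑ l, (M k l) ^ 2)

/-- The positive semidefinite square root, extended by `0` to all matrices. -/

noncomputable def msqrt {d : ℕ} (M : Matrix (Fin d) (Fin d) ℝ) : Matrix (Fin d) (Fin d) ℝ :=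
  if h : M.PosSemidef then
    h.1.eigenvectorUnitary.1 * Matrix.diagonal ((↑) ∘ (Real.sqrt ∘ h.1.eigenvalues)) *
      (star h.1.eigenvectorUnitary : Matrix (Fin d) (Fin d) ℝ)
  else 0

/-- The Bures–Wasserstein distance between positive definite matrices. -/
noncomputable def bwDist {d : ℕ} (A B : Matrix (Fin d) (Fin d) ℝ) : ℝ :=
  Real.sqrt (A.trace + B.trace - 2 * (msqrt (msqrt A * B * msqrt A)).trace)

/-!
The bound is the chain `d_BW(A,B) ≤ ‖√A - √B‖_F ≤ ‖A - B‖_F / (2√λ₀)`, with all square roots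
taken in Mathlib's continuous functional calculus, of which `msqrt` is a concrete description.
-/

open Matrix
open scoped MatrixOrder

section Trace

variable {n : Type*}

lemma transpose_eq_self_of_nonneg {A : Matrix n n ℝ} (hA : 0 ≤ A) : Aᵀ = A :=
  (isHermitian_iff_isSymm.mp (nonneg_iff_posSemidef.mp hA).1).eq

variable [Fintype n]

lemma trace_mul_transpose_self_nonneg (M : Matrix n n ℝ) : 0 ≤ (M * Mᵀ).trace := by
  simpa only [conjTranspose_eq_transpose_of_trivial] using
    (posSemidef_self_mul_conjTranspose M).trace_nonneg

variable [DecidableEq n]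

lemma posDef_sqrt {A : Matrix n n ℝ} (hA : A.PosDef) : (CFC.sqrt A).PosDef :=
  (nonneg_iff_posSemidef.mp (CFC.sqrt_nonneg A)).posDef_iff_isUnit.mpr
    ((CFC.isUnit_sqrt_iff A hA.posSemidef.nonneg).mpr hA.isUnit)

lemma smul_one_le_sqrt {A : Matrix n n ℝ} {c : ℝ} (hc : 0 ≤ c) (h : c • 1 ≤ A) :
    √c • 1 ≤ CFC.sqrt A := by
  have hA : 0 ≤ A := (PosSemidef.one.smul hc).nonneg.trans h
  rw [← Algebra.algebraMap_eq_smul_one] at h ⊢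
  rw [CFC.sqrt_eq_real_sqrt A, cfcₙ_eq_cfc]
  exact algebraMap_le_cfc _ _ _ fun x hx ↦
    Real.sqrt_le_sqrt ((algebraMap_le_iff_le_spectrum).mp h x hx)

-- Expand `0 ≤ tr (E Eᵀ)` for `E = √S - (√S)⁻¹ C`.
theorem trace_le_trace_of_mul_transpose_eq {C S : Matrix n n ℝ} (hS : S.PosDef)
    (h : C * Cᵀ = S * S) : C.trace ≤ S.trace := by
  set T := CFC.sqrt S
  have hTT : T * T = S := CFC.sqrt_mul_sqrt_self S hS.posSemidef.nonneg
  have hT : Tᵀ = T := transpose_eq_self_of_nonneg (CFC.sqrt_nonneg S)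
  have hTdet : IsUnit T.det := (isUnit_iff_isUnit_det T).mp (posDef_sqrt hS).isUnit
  set U := T⁻¹
  have hTU : T * U = 1 := mul_nonsing_inv T hTdet
  have hUT : U * T = 1 := nonsing_inv_mul T hTdet
  have hU : Uᵀ = U := by rw [transpose_nonsing_inv, hT]
  have e1 : (T * (Cᵀ * U)).trace = C.trace := by
    rw [trace_mul_comm, mul_assoc, hUT, mul_one, trace_transpose]
  have e2 : (U * C * T).trace = C.trace := by
    rw [trace_mul_comm, ← mul_assoc, hTU, one_mul]
  have e3 : U * C * (Cᵀ * U) = S := by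
    calc U * C * (Cᵀ * U) = U * T * (T * T) * (T * U) := by
          rw [← mul_assoc, mul_assoc U, h, ← hTT]; simp only [mul_assoc]
      _ = S := by rw [hUT, hTU, one_mul, mul_one, hTT]
  have hE := trace_mul_transpose_self_nonneg (T - U * C)
  rw [transpose_sub, transpose_mul, hT, hU] at hE
  simp only [sub_mul, mul_sub, trace_sub] at hE
  rw [hTT, e1, e2, e3] at hE
  linarith

theorem trace_sqrt_mul_sqrt_le {A B : Matrix n n ℝ} (hA : A.PosDef) (hB : B.PosDef) :
    (CFC.sqrt A * CFC.sqrt B).trace ≤ (CFC.sqrt (CFC.sqrt A * B * CFC.sqrt A)).trace := by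
  set a := CFC.sqrt A
  set b := CFC.sqrt B
  have ha : aᴴ = a := (posDef_sqrt hA).1
  have haT : aᵀ = a := transpose_eq_self_of_nonneg (CFC.sqrt_nonneg A)
  have hbT : bᵀ = b := transpose_eq_self_of_nonneg (CFC.sqrt_nonneg B)
  have hM : (a * B * a).PosDef := by
    have := hB.conjTranspose_mul_mul_same
      (mulVec_injective_iff_isUnit.mpr (posDef_sqrt hA).isUnit)
    rwa [ha] at this
  refine trace_le_trace_of_mul_transpose_eq (posDef_sqrt hM) ?_
  calc a * b * (a * b)ᵀ = a * (b * b) * a := by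
        rw [transpose_mul, haT, hbT]; simp only [mul_assoc]
    _ = _ := by
        rw [CFC.sqrt_mul_sqrt_self B hB.posSemidef.nonneg,
          CFC.sqrt_mul_sqrt_self _ hM.posSemidef.nonneg]

theorem mul_trace_mul_self_le_of_smul_one_le {X P : Matrix n n ℝ} (hX : Xᵀ = X) {c : ℝ}
    (h : c • 1 ≤ P) : c * (X * X).trace ≤ (X * P * X).trace := by
  have hconj : 0 ≤ (X * (P - c • 1) * X).trace := by
    simpa only [conjTranspose_eq_transpose_of_trivial, hX] using
      (h.conjTranspose_mul_mul_same X).trace_nonneg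
  rw [mul_sub, sub_mul, trace_sub, mul_smul_comm, smul_mul_assoc, mul_one, trace_smul,
    smul_eq_mul] at hconj
  linarith

end Trace

section Frobenius

variable {d : ℕ}

lemma msqrt_eq_sqrt (A : Matrix (Fin d) (Fin d) ℝ) : msqrt A = CFC.sqrt A := by
  by_cases h : A.PosSemidef
  · rw [CFC.sqrt_eq_real_sqrt A h.nonneg, cfcₙ_eq_cfc, h.1.cfc_eq, msqrt, dif_pos h]
    rfl
  · rw [msqrt, dif_neg h, CFC.sqrt_of_not_nonneg (by rwa [nonneg_iff_posSemidef])]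

lemma frobNorm_eq_sqrt_trace (M : Matrix (Fin d) (Fin d) ℝ) :
    frobNorm M = √(M * Mᵀ).trace := by
  simp only [frobNorm, trace, diag, mul_apply, transpose_apply, sq]

lemma frobNorm_nonneg (M : Matrix (Fin d) (Fin d) ℝ) : 0 ≤ frobNorm M := Real.sqrt_nonneg _

lemma sq_frobNorm (M : Matrix (Fin d) (Fin d) ℝ) : frobNorm M ^ 2 = (M * Mᵀ).trace := by
  rw [frobNorm_eq_sqrt_trace, Real.sq_sqrt (trace_mul_transpose_self_nonneg M)]

lemma trace_mul_transpose_le (M N : Matrix (Fin d) (Fin d) ℝ) :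
    (M * Nᵀ).trace ≤ frobNorm M * frobNorm N := by
  simpa only [frobNorm, trace, diag, mul_apply, transpose_apply, Fintype.sum_prod_type] using
    Real.sum_mul_le_sqrt_mul_sqrt Finset.univ (fun p : Fin d × Fin d => M p.1 p.2)
      (fun p => N p.1 p.2)

/- With `X = √A - √B` one has `A - B = √A X + X √B`, so `tr (X (A - B)) ≥ 2 √c ‖X‖²` because
`√c ≤ √A, √B`; Cauchy–Schwarz bounds the left side by `‖X‖ ‖A - B‖`. -/
theorem two_mul_sqrt_mul_frobNorm_sqrt_sub_le {A B : Matrix (Fin d) (Fin d) ℝ} {c : ℝ}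
    (hc : 0 ≤ c) (hA : c • 1 ≤ A) (hB : c • 1 ≤ B) :
    2 * √c * frobNorm (CFC.sqrt A - CFC.sqrt B) ≤ frobNorm (A - B) := by
  have hA0 : 0 ≤ A := (PosSemidef.one.smul hc).nonneg.trans hA
  have hB0 : 0 ≤ B := (PosSemidef.one.smul hc).nonneg.trans hB
  set a := CFC.sqrt A
  set b := CFC.sqrt B
  set X := a - b
  have hX : Xᵀ = X := by
    rw [transpose_sub, transpose_eq_self_of_nonneg (CFC.sqrt_nonneg A),
      transpose_eq_self_of_nonneg (CFC.sqrt_nonneg B)]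
  have hAB : A - B = a * X + X * b := by
    rw [mul_sub, sub_mul, sub_add_sub_cancel, CFC.sqrt_mul_sqrt_self A,
      CFC.sqrt_mul_sqrt_self B]
  have hABt : (A - B)ᵀ = A - B := by
    rw [transpose_sub, transpose_eq_self_of_nonneg hA0, transpose_eq_self_of_nonneg hB0]
  have hlow : 2 * √c * frobNorm X ^ 2 ≤ frobNorm X * frobNorm (A - B) := by
    calc 2 * √c * frobNorm X ^ 2 = √c * (X * X).trace + √c * (X * X).trace := by
          rw [sq_frobNorm, hX]; ring
      _ ≤ (X * a * X).trace + (X * b * X).trace :=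
          add_le_add (mul_trace_mul_self_le_of_smul_one_le hX (smul_one_le_sqrt hc hA))
            (mul_trace_mul_self_le_of_smul_one_le hX (smul_one_le_sqrt hc hB))
      _ = (X * (A - B)ᵀ).trace := by
          rw [hABt, hAB, mul_add, trace_add, ← mul_assoc, trace_mul_comm X (X * b)]
      _ ≤ frobNorm X * frobNorm (A - B) := trace_mul_transpose_le X (A - B)
  rcases (frobNorm_nonneg X).eq_or_lt with hX0 | hX0
  · rw [← hX0, mul_zero]
    exact frobNorm_nonneg _
  · refine le_of_mul_le_mul_right ?_ hX0
    linarith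

theorem bwDist_le_frobNorm_sqrt_sub {A B : Matrix (Fin d) (Fin d) ℝ} (hA : A.PosDef)
    (hB : B.PosDef) : bwDist A B ≤ frobNorm (CFC.sqrt A - CFC.sqrt B) := by
  rw [bwDist, msqrt_eq_sqrt, msqrt_eq_sqrt, frobNorm_eq_sqrt_trace]
  refine Real.sqrt_le_sqrt ?_
  have hexp : ((CFC.sqrt A - CFC.sqrt B) * (CFC.sqrt A - CFC.sqrt B)ᵀ).trace
      = A.trace + B.trace - 2 * (CFC.sqrt A * CFC.sqrt B).trace := by
    rw [transpose_sub, transpose_eq_self_of_nonneg (CFC.sqrt_nonneg A),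
      transpose_eq_self_of_nonneg (CFC.sqrt_nonneg B)]
    simp only [sub_mul, mul_sub, trace_sub]
    rw [CFC.sqrt_mul_sqrt_self A hA.posSemidef.nonneg,
      CFC.sqrt_mul_sqrt_self B hB.posSemidef.nonneg, trace_mul_comm (CFC.sqrt B)]
    ring
  linarith [trace_sqrt_mul_sqrt_le hA hB]

end Frobenius

/-- For SPD matrices with eigenvalues bounded below by `λ₀`,
`d_BW(A,B)² ≤ ‖A − B‖_F² / (4 λ₀)`. -/
theorem bwDist_sq_le
    (d : ℕ) (A B : Matrix (Fin d) (Fin d) ℝ) (lam0 : ℝ) (hlam0 : 0 < lam0)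
    (hA : A.PosDef) (hB : B.PosDef)
    (hA0 : (A - lam0 • (1 : Matrix (Fin d) (Fin d) ℝ)).PosSemidef)
    (hB0 : (B - lam0 • (1 : Matrix (Fin d) (Fin d) ℝ)).PosSemidef) :
    bwDist A B ^ 2 ≤ (1 / (4 * lam0)) * frobNorm (A - B) ^ 2 := by
  have hsqrt : 0 < 2 * √lam0 := by positivity
  have hlip := two_mul_sqrt_mul_frobNorm_sqrt_sub_le hlam0.le hA0 hB0
  calc bwDist A B ^ 2 ≤ frobNorm (CFC.sqrt A - CFC.sqrt B) ^ 2 :=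
        pow_le_pow_left₀ (Real.sqrt_nonneg _) (bwDist_le_frobNorm_sqrt_sub hA hB) 2
    _ ≤ (frobNorm (A - B) / (2 * √lam0)) ^ 2 := by
        gcongr
        · exact frobNorm_nonneg _
        · rwa [le_div_iff₀' hsqrt]
    _ = 1 / (4 * lam0) * frobNorm (A - B) ^ 2 := by
        rw [div_pow, mul_pow, Real.sq_sqrt hlam0.le]; ring
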